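/- Let F be a field, q ∈ F nonzero and not a root of unity, and d ≥ 1. With T_q and Z defined as above, one has (T_q Z)³ = (-1)^d q^{-d(d-1)} I, i.e., T_q Z T_q Z T_q Z = (-1)^d q^{-d(d-1)} times the identity matrix. -/

import Mathlib

/-- The symmetric q-integer `[n]_q = (q^n - q^{-n})/(q - q⁻¹)`. -/
def qInt {F : Type*} [Field F] (q : F) (n : ℕ) : F :=
  (q ^ n - q⁻¹ ^ n) / (q - q⁻¹)

/-- The q-factorial `[n]!_q`. -/
def qFact {F : Type*} [Field F] (q : F) : ℕ → F
  | 0 => 1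
  | n + 1 => qInt q (n + 1) * qFact q n

/-- The Gaussian q-binomial coefficient `[n choose i]_q`. -/
def qBinom {F : Type*} [Field F] (q : F) (n i : ℕ) : F :=
  qFact q n / (qFact q i * qFact q (n - i))

/-- The lower triangular matrix `T_q` with `(i,j)`-entry
`(-1)^j q^{j(1-i)} [i choose j]_q` for `j ≤ i`. -/
def Tmat {F : Type*} [Field F] (d : ℕ) (q : F) :
    Matrix (Fin (d + 1)) (Fin (d + 1)) F :=
  Matrix.of fun i j =>
    if (j : ℕ) ≤ (i : ℕ) then
      (-1) ^ (j : ℕ) * q ^ (((j : ℕ) : ℤ) * (1 - ((i : ℕ) : ℤ))) * qBinom q (i : ℕ) (j : ℕ)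
    else 0

/-- The matrix `Z` with `(i,j)`-entry `δ_{i+j,d}`. -/
def Zmat (F : Type*) [Field F] (d : ℕ) :
    Matrix (Fin (d + 1)) (Fin (d + 1)) F :=
  Matrix.of fun i j => if (i : ℕ) + (j : ℕ) = d then 1 else 0

/-
The entries of `T_q Z T_q` are the signed sums
`qAltSum q a d k = ∑ⱼ (-1)^j q^{j(k-a+1)} [a choose j] [d-j choose k]`, a q-analogue of
`∑ⱼ (-1)^j C(i,j) C(d-j,k) = C(d-i,d-k)`; induction on `i` with the two q-Pascal rules gives
`qAltSum q i d k = q^{-i(d-k)} [d-i choose d-k]`. Since `[n choose m]_q` is invariant under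
`q ↦ q⁻¹`, this says `T_q Z T_q = c Z T_{q⁻¹} Z` with `c = (-1)^d q^{-d(d-1)}`, and the case
`d = a`, after reflecting `j ↦ a - j`, says `T_{q⁻¹} T_q = 1`. As `Z² = 1`,
`(T_q Z)³ = (T_q Z T_q)(Z T_q Z) = c Z T_{q⁻¹} T_q Z = c`.
-/

open Finset

section QInt
variable {F : Type*} [Field F]

lemma qInt_inv (q : F) (n : ℕ) : qInt q⁻¹ n = qInt q n := by
  rw [qInt, qInt, inv_inv, ← neg_sub q, ← neg_sub (q ^ n), neg_div_neg_eq]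

lemma qFact_inv (q : F) (n : ℕ) : qFact q⁻¹ n = qFact q n := by
  induction n with
  | zero => rfl
  | succ n ih => rw [qFact, qFact, qInt_inv, ih]

lemma qBinom_inv (q : F) (n m : ℕ) : qBinom q⁻¹ n m = qBinom q n m := by
  simp only [qBinom, qFact_inv]

lemma qInt_zero (q : F) : qInt q 0 = 0 := by
  simp [qInt]

lemma qInt_add (q : F) (a b : ℕ) :
    qInt q (a + b) = q ^ b * qInt q a + q⁻¹ ^ a * qInt q b := by
  simp only [qInt]
  ring

variable {q : F} (hq : q ≠ 0) (hroot : ∀ n : ℕ, 0 < n → q ^ n ≠ 1)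
include hq hroot

lemma pow_sub_inv_pow_ne_zero {n : ℕ} (hn : 0 < n) : q ^ n - q⁻¹ ^ n ≠ 0 := by
  rw [sub_ne_zero]
  intro h
  apply hroot (n + n) (by omega)
  rw [pow_add]
  nth_rw 2 [h]
  rw [← mul_pow, mul_inv_cancel₀ hq, one_pow]

lemma qInt_ne_zero {n : ℕ} (hn : 0 < n) : qInt q n ≠ 0 :=
  div_ne_zero (pow_sub_inv_pow_ne_zero hq hroot hn)
    (by simpa using pow_sub_inv_pow_ne_zero hq hroot one_pos)

lemma qFact_ne_zero (n : ℕ) : qFact q n ≠ 0 := by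
  induction n with
  | zero => exact one_ne_zero
  | succ n ih => exact mul_ne_zero (qInt_ne_zero hq hroot n.succ_pos) ih

omit hq in
lemma inv_pow_ne_one : ∀ n : ℕ, 0 < n → q⁻¹ ^ n ≠ 1 := fun n hn h =>
  hroot n hn (by rwa [inv_pow, inv_eq_one] at h)

end QInt

/-- `qBinom q n m` is junk when `n < m`; this version vanishes there. -/
def qChoose {F : Type*} [Field F] (q : F) (n m : ℕ) : F :=
  if m ≤ n then qBinom q n m else 0

section QChoose
variable {F : Type*} [Field F] {q : F}

lemma qChoose_of_le {n m : ℕ} (h : m ≤ n) :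
    qChoose q n m = qFact q n / (qFact q m * qFact q (n - m)) := by
  rw [qChoose, if_pos h, qBinom]

lemma qChoose_of_lt {n m : ℕ} (h : n < m) : qChoose q n m = 0 :=
  if_neg (by omega)

lemma qChoose_inv (q : F) (n m : ℕ) : qChoose q⁻¹ n m = qChoose q n m := by
  simp only [qChoose, qBinom_inv]

lemma qChoose_symm {n m : ℕ} (h : m ≤ n) : qChoose q n (n - m) = qChoose q n m := by
  rw [qChoose_of_le h, qChoose_of_le (Nat.sub_le n m), Nat.sub_sub_self h, mul_comm]

variable (hq : q ≠ 0) (hroot : ∀ n : ℕ, 0 < n → q ^ n ≠ 1)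
include hq hroot

lemma qChoose_zero_right (n : ℕ) : qChoose q n 0 = 1 := by
  rw [qChoose_of_le n.zero_le, qFact, one_mul, Nat.sub_zero, div_self (qFact_ne_zero hq hroot n)]

lemma qChoose_self (n : ℕ) : qChoose q n n = 1 := by
  rw [qChoose_of_le le_rfl, Nat.sub_self, qFact, mul_one, div_self (qFact_ne_zero hq hroot n)]

lemma qChoose_succ_succ_mul_qInt (n m : ℕ) :
    qChoose q (n + 1) (m + 1) * qInt q (m + 1) = qInt q (n + 1) * qChoose q n m := by
  rcases le_or_gt m n with h | h
  · rw [qChoose_of_le (by omega), qChoose_of_le h, Nat.add_sub_add_right, qFact, qFact]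
    have := qFact_ne_zero hq hroot m
    have := qFact_ne_zero hq hroot (n - m)
    have := qInt_ne_zero hq hroot m.succ_pos
    field_simp
  · rw [qChoose_of_lt (by omega), qChoose_of_lt h, zero_mul, mul_zero]

lemma qChoose_succ_right_mul_qInt (n m : ℕ) :
    qChoose q n (m + 1) * qInt q (m + 1) = qInt q (n - m) * qChoose q n m := by
  rcases lt_or_ge m n with h | h
  · obtain ⟨k, rfl⟩ : ∃ k, n = m + 1 + k := ⟨n - (m + 1), by omega⟩
    rw [qChoose_of_le (by omega), qChoose_of_le (by omega), show m + 1 + k - m = k + 1 by omega,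
      show m + 1 + k - (m + 1) = k by omega, qFact.eq_2 q m, qFact.eq_2 q k]
    have := qFact_ne_zero hq hroot m
    have := qFact_ne_zero hq hroot k
    have := qInt_ne_zero hq hroot m.succ_pos
    have := qInt_ne_zero hq hroot k.succ_pos
    field_simp
  · rw [qChoose_of_lt (by omega), Nat.sub_eq_zero_of_le h, qInt_zero, zero_mul, zero_mul]

lemma qChoose_succ_succ (n m : ℕ) :
    qChoose q (n + 1) (m + 1)
      = q ^ ((m : ℤ) + 1) * qChoose q n (m + 1) + q ^ ((m : ℤ) - n) * qChoose q n m := by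
  refine mul_right_cancel₀ (qInt_ne_zero hq hroot m.succ_pos) ?_
  rw [add_mul, mul_assoc, mul_assoc, qChoose_succ_succ_mul_qInt hq hroot,
    qChoose_succ_right_mul_qInt hq hroot]
  rcases le_or_gt m n with h | h
  · obtain ⟨k, rfl⟩ := Nat.exists_eq_add_of_le h
    rw [show m + k + 1 = k + (m + 1) by omega, qInt_add, Nat.add_sub_cancel_left]
    push_cast
    rw [show (m : ℤ) - (m + k) = -k by ring, zpow_neg, zpow_natCast, ← inv_pow,
      show (m : ℤ) + 1 = ((m + 1 : ℕ) : ℤ) by push_cast; ring, zpow_natCast]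
    ring
  · rw [qChoose_of_lt h]
    ring

lemma qChoose_succ_succ' (n m : ℕ) :
    qChoose q (n + 1) (m + 1)
      = q ^ (-((m : ℤ) + 1)) * qChoose q n (m + 1) + q ^ ((n : ℤ) - m) * qChoose q n m := by
  have := qChoose_succ_succ (inv_ne_zero hq) (inv_pow_ne_one hroot) n m
  rwa [qChoose_inv, qChoose_inv, qChoose_inv, inv_zpow', inv_zpow', neg_sub] at this

end QChoose

def qAltSum {F : Type*} [Field F] (q : F) (i d k : ℕ) : F :=
  ∑ j ∈ range (i + 1),
    (-1) ^ j * q ^ ((j : ℤ) * (k - i + 1)) * qChoose q i j * qChoose q (d - j) k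

section QAltSum
variable {F : Type*} [Field F] {q : F}

lemma qAltSum_zero_left (d k : ℕ) : qAltSum q 0 d k = qChoose q d k := by
  simp [qAltSum, qChoose, qBinom, qFact]

lemma qAltSum_of_lt {i d k : ℕ} (h : d < k) : qAltSum q i d k = 0 :=
  sum_eq_zero fun j _ => by rw [qChoose_of_lt (show d - j < k by omega), mul_zero]

variable (hq : q ≠ 0) (hroot : ∀ n : ℕ, 0 < n → q ^ n ≠ 1)
include hq hroot

lemma qAltSum_succ (i d k : ℕ) :
    qAltSum q (i + 1) d k = qAltSum q i d k - q ^ ((k : ℤ) - 2 * i) * qAltSum q i (d - 1) k := by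
  set g : ℕ → F := fun j =>
    (-1) ^ j * q ^ ((j : ℤ) * (k - i + 1)) * qChoose q i j * qChoose q (d - j) k with hg
  have hg_sum : qAltSum q i d k = ∑ j ∈ range (i + 1), g (j + 1) + g 0 := by
    rw [← sum_range_succ', sum_range_succ, qAltSum, ← hg, left_eq_add, hg]
    simp only [qChoose_of_lt (lt_add_one i), mul_zero, zero_mul]
  -- Pascal's rule in the upper index splits each term into one of `qAltSum q i d k`
  -- and one of `qAltSum q i (d - 1) k`
  have hterm : ∀ j : ℕ,
      (-1) ^ (j + 1) * q ^ (((j + 1 : ℕ) : ℤ) * (k - (i + 1 : ℕ) + 1)) * qChoose q (i + 1) (j + 1)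
          * qChoose q (d - (j + 1)) k
        = g (j + 1) - q ^ ((k : ℤ) - 2 * i) *
          ((-1) ^ j * q ^ ((j : ℤ) * (k - i + 1)) * qChoose q i j * qChoose q (d - 1 - j) k) := by
    intro j
    have e1 : q ^ (((j + 1 : ℕ) : ℤ) * (k - (i + 1 : ℕ) + 1)) * q ^ ((j : ℤ) + 1)
        = q ^ (((j + 1 : ℕ) : ℤ) * (k - i + 1)) := by
      rw [← zpow_add₀ hq]; push_cast; ring_nf
    have e2 : q ^ (((j + 1 : ℕ) : ℤ) * (k - (i + 1 : ℕ) + 1)) * q ^ ((j : ℤ) - i)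
        = q ^ ((k : ℤ) - 2 * i) * q ^ ((j : ℤ) * (k - i + 1)) := by
      rw [← zpow_add₀ hq, ← zpow_add₀ hq]; push_cast; ring_nf
    simp only [hg]
    rw [qChoose_succ_succ hq hroot, show d - (j + 1) = d - 1 - j by omega]
    linear_combination (-1) ^ (j + 1) * qChoose q i (j + 1) * qChoose q (d - 1 - j) k * e1
      + (-1) ^ (j + 1) * qChoose q i j * qChoose q (d - 1 - j) k * e2
  rw [qAltSum, sum_range_succ', sum_congr rfl fun j _ => hterm j, sum_sub_distrib, ← mul_sum,
    hg_sum, qAltSum]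
  simp only [hg, Nat.cast_add, Nat.cast_one, pow_zero, CharP.cast_eq_zero, zero_mul, zpow_ofNat,
    mul_one, qChoose_zero_right hq hroot, tsub_zero, one_mul]
  ring

lemma qAltSum_eq {i d k : ℕ} (hi : i ≤ d) (hk : k ≤ d) :
    qAltSum q i d k = q ^ (-(i : ℤ) * (d - k)) * qChoose q (d - i) (d - k) := by
  induction i generalizing d with
  | zero => simp [qAltSum_zero_left, qChoose_symm hk]
  | succ i ih =>
    rw [qAltSum_succ hq hroot, ih (by omega) hk]
    rcases hk.eq_or_lt with rfl | hk
    · rw [qAltSum_of_lt (show k - 1 < k by omega)]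
      simp [qChoose_zero_right hq hroot]
    rw [ih (by omega) (by omega), show d - i = d - (i + 1) + 1 by omega,
      show d - k = d - 1 - k + 1 by omega, show d - 1 - i = d - (i + 1) by omega,
      qChoose_succ_succ' hq hroot]
    have hn : ((d - (i + 1) : ℕ) : ℤ) = d - i - 1 := by omega
    have hm : ((d - 1 - k : ℕ) : ℤ) = d - 1 - k := by omega
    have e1 : q ^ (-(i : ℤ) * (d - k)) * q ^ (-(((d - 1 - k : ℕ) : ℤ) + 1))
        = q ^ (-((i + 1 : ℕ) : ℤ) * (d - k)) := by
      rw [← zpow_add₀ hq, hm]; push_cast; ring_nf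
    have e2 : q ^ (-(i : ℤ) * (d - k)) * q ^ (((d - (i + 1) : ℕ) : ℤ) - (d - 1 - k : ℕ))
        = q ^ ((k : ℤ) - 2 * i) * q ^ (-(i : ℤ) * ((d - 1 : ℕ) - k)) := by
      rw [← zpow_add₀ hq, ← zpow_add₀ hq, hn, hm, Nat.cast_sub (by omega)]; push_cast; ring_nf
    linear_combination qChoose q (d - (i + 1)) (d - 1 - k + 1) * e1
      + qChoose q (d - (i + 1)) (d - 1 - k) * e2

end QAltSum

def tEntry {F : Type*} [Field F] (q : F) (i j : ℕ) : F :=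
  (-1) ^ j * q ^ ((j : ℤ) * (1 - i)) * qChoose q i j

section TEntry
variable {F : Type*} [Field F] {q : F}

lemma tEntry_of_lt {i j : ℕ} (h : i < j) : tEntry q i j = 0 := by
  rw [tEntry, qChoose_of_lt h, mul_zero]

lemma tEntry_inv (i j : ℕ) :
    tEntry q⁻¹ i j = (-1) ^ j * q ^ ((j : ℤ) * (i - 1)) * qChoose q i j := by
  rw [tEntry, qChoose_inv, inv_zpow', ← mul_neg, neg_sub]

variable (hq : q ≠ 0) (hroot : ∀ n : ℕ, 0 < n → q ^ n ≠ 1)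
include hq hroot

lemma sum_tEntry_mul_tEntry_sub {a d k : ℕ} (ha : a ≤ d) (hk : k ≤ d) :
    ∑ j ∈ range (d + 1), tEntry q a j * tEntry q (d - j) k
      = (-1) ^ d * q ^ (-((d : ℤ) * (d - 1))) * tEntry q⁻¹ (d - a) (d - k) := by
  have hterm : ∀ j ∈ range (a + 1), tEntry q a j * tEntry q (d - j) k
      = (-1) ^ k * q ^ ((k : ℤ) * (1 - d)) *
        ((-1) ^ j * q ^ ((j : ℤ) * (k - a + 1)) * qChoose q a j * qChoose q (d - j) k) := by
    intro j hj
    have e : q ^ ((j : ℤ) * (1 - a)) * q ^ ((k : ℤ) * (1 - (d - j : ℕ)))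
        = q ^ ((k : ℤ) * (1 - d)) * q ^ ((j : ℤ) * (k - a + 1)) := by
      rw [← zpow_add₀ hq, ← zpow_add₀ hq, Nat.cast_sub (by have := mem_range.1 hj; omega)]
      ring_nf
    rw [tEntry, tEntry]
    linear_combination (-1) ^ j * (-1) ^ k * qChoose q a j * qChoose q (d - j) k * e
  have hsign : (-1 : F) ^ d * (-1) ^ (d - k) = (-1) ^ k := by
    rw [← pow_add]
    exact neg_one_pow_congr (by simp [Nat.even_add, Nat.even_sub hk]; tauto)
  have e : q ^ ((k : ℤ) * (1 - d)) * q ^ (-(a : ℤ) * (d - k))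
      = q ^ (-((d : ℤ) * (d - 1))) * q ^ (((d - k : ℕ) : ℤ) * ((d - a : ℕ) - 1)) := by
    rw [← zpow_add₀ hq, ← zpow_add₀ hq, Nat.cast_sub ha, Nat.cast_sub hk]
    ring_nf
  rw [← sum_subset (range_subset_range.2 (by omega : a + 1 ≤ d + 1)) fun j _ hj => by
      rw [tEntry_of_lt (by simpa using hj), zero_mul],
    sum_congr rfl hterm, ← mul_sum, ← qAltSum, qAltSum_eq hq hroot ha hk, tEntry_inv]
  linear_combination qChoose q (d - a) (d - k) * ((-1) ^ k * e - q ^ (-((d : ℤ) * (d - 1))) *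
    q ^ (((d - k : ℕ) : ℤ) * ((d - a : ℕ) - 1)) * hsign)

lemma sum_tEntry_inv_mul_tEntry {a e c : ℕ} (ha : a ≤ e) :
    ∑ j ∈ range (e + 1), tEntry q⁻¹ a j * tEntry q j c = if a = c then 1 else 0 := by
  rw [← sum_subset (range_subset_range.2 (by omega : a + 1 ≤ e + 1)) fun j _ hj => by
      rw [tEntry_of_lt (by simpa using hj), zero_mul]]
  rcases lt_or_ge a c with hac | hca
  · rw [if_neg hac.ne]
    exact sum_eq_zero fun j hj => by
      rw [tEntry_of_lt (show j < c by have := mem_range.1 hj; omega), mul_zero]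
  -- after reflecting `j ↦ a - j` this is the case `d = a` of `qAltSum_eq`
  have hterm : ∀ j ∈ range (a + 1), tEntry q⁻¹ a (a - j) * tEntry q (a - j) c
      = (-1) ^ (a + c) * q ^ (((c : ℤ) - a) * (1 - a)) *
        ((-1) ^ j * q ^ ((j : ℤ) * (c - a + 1)) * qChoose q a j * qChoose q (a - j) c) := by
    intro j hj
    have hj : j ≤ a := Nat.lt_succ_iff.1 (mem_range.1 hj)
    have hsign : (-1 : F) ^ (a - j) * (-1) ^ c = (-1) ^ (a + c) * (-1) ^ j := by
      rw [← pow_add, ← pow_add]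
      exact neg_one_pow_congr (by simp [Nat.even_add, Nat.even_sub hj]; tauto)
    have e : q ^ (((a - j : ℕ) : ℤ) * (a - 1)) * q ^ ((c : ℤ) * (1 - (a - j : ℕ)))
        = q ^ (((c : ℤ) - a) * (1 - a)) * q ^ ((j : ℤ) * (c - a + 1)) := by
      rw [← zpow_add₀ hq, ← zpow_add₀ hq, Nat.cast_sub hj]
      ring_nf
    rw [tEntry_inv, tEntry, qChoose_symm hj]
    linear_combination qChoose q a j * qChoose q (a - j) c *
      ((-1) ^ (a - j) * (-1) ^ c * e
        + q ^ (((c : ℤ) - a) * (1 - a)) * q ^ ((j : ℤ) * (c - a + 1)) * hsign)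
  rw [← sum_range_reflect]
  simp only [Nat.add_sub_cancel]
  rw [sum_congr rfl hterm, ← mul_sum, ← qAltSum, qAltSum_eq hq hroot le_rfl hca, Nat.sub_self]
  rcases hca.eq_or_lt with rfl | hca
  · simp [qChoose_self hq hroot, ← two_mul]
  · rw [qChoose_of_lt (Nat.sub_pos_of_lt hca), if_neg hca.ne', mul_zero, mul_zero]

end TEntry

section Matrices
variable {F : Type*} [Field F] {d : ℕ}

lemma Tmat_apply (q : F) (i j : Fin (d + 1)) : Tmat d q i j = tEntry q i j := by
  rw [Tmat, Matrix.of_apply, tEntry, qChoose]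
  split_ifs <;> simp

lemma Zmat_apply (i j : Fin (d + 1)) : Zmat F d i j = if j = i.rev then 1 else 0 := by
  simp only [Zmat, Matrix.of_apply, Fin.ext_iff, Fin.val_rev]
  congr 1
  exact propext (by omega)

lemma Zmat_mul_apply (M : Matrix (Fin (d + 1)) (Fin (d + 1)) F) (i j : Fin (d + 1)) :
    (Zmat F d * M) i j = M i.rev j := by
  simp [Matrix.mul_apply, Zmat_apply]

lemma mul_Zmat_apply (M : Matrix (Fin (d + 1)) (Fin (d + 1)) F) (i j : Fin (d + 1)) :
    (M * Zmat F d) i j = M i j.rev := by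
  simp [Matrix.mul_apply, Zmat_apply, eq_comm (a := j), Fin.rev_eq_iff]

lemma Zmat_mul_Zmat : Zmat F d * Zmat F d = 1 := by
  ext i j
  rw [Zmat_mul_apply, Zmat_apply, Fin.rev_rev, Matrix.one_apply]
  exact if_congr eq_comm rfl rfl

variable {q : F} (hq : q ≠ 0) (hroot : ∀ n : ℕ, 0 < n → q ^ n ≠ 1)
include hq hroot

lemma Tmat_inv_mul_Tmat : Tmat d q⁻¹ * Tmat d q = 1 := by
  ext a c
  simp only [Matrix.mul_apply, Matrix.one_apply, Tmat_apply, ← Fin.val_inj]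
  rw [Fin.sum_univ_eq_sum_range (fun j => tEntry q⁻¹ a j * tEntry q j c),
    sum_tEntry_inv_mul_tEntry hq hroot a.is_le]

lemma Tmat_mul_Zmat_mul_Tmat :
    Tmat d q * (Zmat F d * Tmat d q)
      = ((-1) ^ d * q ^ (-((d : ℤ) * (d - 1)))) • (Zmat F d * (Tmat d q⁻¹ * Zmat F d)) := by
  ext a k
  rw [Matrix.smul_apply, Zmat_mul_apply, mul_Zmat_apply, Matrix.mul_apply]
  simp only [Zmat_mul_apply, Tmat_apply, Fin.val_rev, Nat.add_sub_add_right, smul_eq_mul]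
  rw [Fin.sum_univ_eq_sum_range (fun j => tEntry q a j * tEntry q (d - j) k),
    sum_tEntry_mul_tEntry_sub hq hroot a.is_le k.is_le]

end Matrices

theorem stmt_8_general {F : Type*} [Field F] (d : ℕ) (q : F) (hq : q ≠ 0)
    (hroot : ∀ n : ℕ, 0 < n → q ^ n ≠ 1) :
    (Tmat d q * Zmat F d) * (Tmat d q * Zmat F d) * (Tmat d q * Zmat F d) =
      ((-1) ^ d * q ^ (-((d : ℤ) * ((d : ℤ) - 1)))) • 1 := by
  have hZZ : ∀ M, Zmat F d * (Zmat F d * M) = M := fun M => by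
    rw [← mul_assoc, Zmat_mul_Zmat, one_mul]
  have hTT : ∀ M, Tmat d q⁻¹ * (Tmat d q * M) = M := fun M => by
    rw [← mul_assoc, Tmat_inv_mul_Tmat hq hroot, one_mul]
  calc (Tmat d q * Zmat F d) * (Tmat d q * Zmat F d) * (Tmat d q * Zmat F d)
      = Tmat d q * (Zmat F d * Tmat d q) * (Zmat F d * (Tmat d q * Zmat F d)) := by
        simp only [mul_assoc]
    _ = _ := by
      rw [Tmat_mul_Zmat_mul_Tmat hq hroot]
      simp only [smul_mul_assoc, mul_assoc, hZZ, hTT, Zmat_mul_Zmat]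

theorem stmt_8 {F : Type*} [Field F] (d : ℕ) (hd : 1 ≤ d) (q : F) (hq : q ≠ 0)
    (hroot : ∀ n : ℕ, 0 < n → q ^ n ≠ 1) :
    (Tmat d q * Zmat F d) * (Tmat d q * Zmat F d) * (Tmat d q * Zmat F d) =
      ((-1) ^ d * q ^ (-((d : ℤ) * ((d : ℤ) - 1)))) • 1 :=
  stmt_8_general d q hq hroot
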